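/- For every real z > 2, the semigroup M_2(𝕋_{[1,z]}) of 2×2 matrices over the truncated tropical semiring 𝕋_{[1,z]} is strongly permutable. -/

import Mathlib

set_option maxHeartbeats 1000000

universe u

/-! ### Semiring classes.

A *semiring* here is a nonempty set with an associative commutative addition and an
associative multiplication which distributes over addition on both sides; no zero or
identity element is assumed. -/

class PlainSemiring (S : Type u) extends Add S, Mul S where
  nonempty' : Nonempty S
  add_assoc' : ∀ a b c : S, a + b + c = a + (b + c)
  add_comm' : ∀ a b : S, a + b = b + a
  mul_assoc' : ∀ a b c : S, a * b * c = a * (b * c)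
  left_distrib' : ∀ a b c : S, a * (b + c) = a * b + a * c
  right_distrib' : ∀ a b c : S, (a + b) * c = a * c + b * c

/-- A bipotent semiring: `x + y` is always either `x` or `y`.
(The induced total order is given by `x ≤ y ↔ x + y = y`.) -/
class BipotentSemiring (S : Type u) extends PlainSemiring S where
  bipotent : ∀ a b : S, a + b = a ∨ a + b = b

/-- A commutative bipotent semiring. -/
class CommBipotentSemiring (S : Type u) extends BipotentSemiring S where
  mul_comm' : ∀ a b : S, a * b = b * a

/-- `mpow a n` is the `(n+1)`-st power of `a`, so the set of positive powers of `a`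
is exactly `Set.range (mpow a)`, and the multiplicative order of `a` is the
cardinality of `Set.range (mpow a)`. -/
def mpow {S : Type*} [Mul S] (a : S) : ℕ → S
  | 0 => a
  | n + 1 => mpow a n * a

lemma mpow_mul_mpow {S : Type*} [PlainSemiring S] (a : S) (m n : ℕ) :
    mpow a m * mpow a n = mpow a (m + n + 1) := by
  induction n with
  | zero => rfl
  | succ n ih =>
    show mpow a m * (mpow a n * a) = mpow a (m + n + 1) * a
    rw [← PlainSemiring.mul_assoc', ih]

/-! ### Products of finite families, and permutability. -/

/-- Fold step used to define sums/products of possibly empty families in a structure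
with no neutral element; the overall fold is `none` iff the family is empty. -/
def optStep {S : Type*} (op : S → S → S) : Option S → S → Option S :=
  fun acc x => some (acc.elim x (fun a => op a x))

/-- The sum `s 0 + s 1 + ⋯` of a finite family, as an `Option` (`none` iff `k = 0`). -/
def finSum {S : Type*} [Add S] {k : ℕ} (s : Fin k → S) : Option S :=
  (List.ofFn s).foldl (optStep (· + ·)) none

/-- The product `s 0 * s 1 * ⋯` of a finite family, as an `Option` (`none` iff `k = 0`). -/
def finProd {S : Type*} [Mul S] {k : ℕ} (s : Fin k → S) : Option S :=
  (List.ofFn s).foldl (optStep (· * ·)) none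

/-- A multiplicative structure is `k`-permutable if every product of `k` elements is
preserved by some non-identity permutation of its factors. -/
def KPermutable (S : Type*) [Mul S] (k : ℕ) : Prop :=
  ∀ s : Fin k → S, ∃ σ : Equiv.Perm (Fin k), σ ≠ Equiv.refl (Fin k) ∧
    finProd (fun i => s (σ i)) = finProd s

/-- A semigroup is strongly permutable if it is `k`-permutable for some `k ≥ 2`. -/
def StronglyPermutable (S : Type*) [Mul S] : Prop :=
  ∃ k : ℕ, 2 ≤ k ∧ KPermutable S k

/-- A semigroup is weakly permutable if for some `k ≥ 2`, any product of `k` elements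
is computed identically by two distinct permutations of its factors. -/
def WeaklyPermutable (S : Type*) [Mul S] : Prop :=
  ∃ k : ℕ, 2 ≤ k ∧ ∀ s : Fin k → S, ∃ σ τ : Equiv.Perm (Fin k), σ ≠ τ ∧
    finProd (fun i => s (σ i)) = finProd (fun i => s (τ i))

/-- Isomorphism of semirings (bijection preserving addition and multiplication). -/
def RingLikeIso (S T : Type*) [Add S] [Mul S] [Add T] [Mul T] : Prop :=
  ∃ f : S → T, Function.Bijective f ∧ (∀ a b : S, f (a + b) = f a + f b) ∧
    (∀ a b : S, f (a * b) = f a * f b)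

/-! ### Matrices. -/

/-- Square `n × n` matrices over `S`. -/
def MatSR (S : Type u) (n : ℕ) : Type u := Fin n → Fin n → S

/-- Matrix multiplication, `(A*B) i j = Σ_k (A i k * B k j)`.  (For `n ≥ 1` — the only
case of interest — the `getD` default value is never used.) -/
def matMul {S : Type*} [Add S] [Mul S] {n : ℕ} (A B : MatSR S n) : MatSR S n :=
  fun i j => (finSum (fun k : Fin n => A i k * B k j)).getD (A i j * B i j)

/-- The multiplicative semigroup `M_n(S)`. -/
instance {S : Type*} [Add S] [Mul S] {n : ℕ} : Mul (MatSR S n) := ⟨matMul⟩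

/-! ### `S⁰`: adjoining a zero, and upper triangular matrices. -/

/-- `S` with a zero (additively neutral, multiplicatively absorbing) element adjoined. -/
inductive Adj0 (S : Type u) : Type u
  | zero : Adj0 S
  | elem : S → Adj0 S

namespace Adj0

def add' {S : Type*} [Add S] : Adj0 S → Adj0 S → Adj0 S
  | .zero, b => b
  | .elem a, .zero => .elem a
  | .elem a, .elem b => .elem (a + b)

def mul' {S : Type*} [Mul S] : Adj0 S → Adj0 S → Adj0 S
  | .zero, _ => .zero
  | .elem _, .zero => .zero
  | .elem a, .elem b => .elem (a * b)

instance {S : Type*} [Add S] : Add (Adj0 S) := ⟨add'⟩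
instance {S : Type*} [Mul S] : Mul (Adj0 S) := ⟨mul'⟩

@[simp] lemma zero_add {S : Type*} [Add S] (b : Adj0 S) : (zero : Adj0 S) + b = b := rfl
@[simp] lemma add_zero {S : Type*} [Add S] (a : Adj0 S) : a + (zero : Adj0 S) = a := by
  cases a <;> rfl
@[simp] lemma elem_add_elem {S : Type*} [Add S] (a b : S) :
    (elem a : Adj0 S) + elem b = elem (a + b) := rfl
@[simp] lemma zero_mul {S : Type*} [Mul S] (b : Adj0 S) : (zero : Adj0 S) * b = zero := rfl
@[simp] lemma mul_zero {S : Type*} [Mul S] (a : Adj0 S) : a * (zero : Adj0 S) = zero := by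
  cases a <;> rfl
@[simp] lemma elem_mul_elem {S : Type*} [Mul S] (a b : S) :
    (elem a : Adj0 S) * elem b = elem (a * b) := rfl

lemma add_eq_zero_iff {S : Type*} [Add S] (a b : Adj0 S) :
    a + b = zero ↔ a = zero ∧ b = zero := by
  cases a <;> cases b <;> simp

end Adj0

lemma foldl_optStep_adj0 {S : Type*} [Add S] (l : List (Adj0 S)) (a : Adj0 S) :
    ∃ c : Adj0 S, l.foldl (optStep (· + ·)) (some a) = some c ∧
      (c = Adj0.zero ↔ a = Adj0.zero ∧ ∀ x ∈ l, x = Adj0.zero) := by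
  induction l generalizing a with
  | nil => exact ⟨a, rfl, by simp⟩
  | cons x l ih =>
    obtain ⟨c, hc, hiff⟩ := ih (a + x)
    refine ⟨c, ?_, ?_⟩
    · simpa [optStep] using hc
    · rw [hiff, Adj0.add_eq_zero_iff]
      simp only [List.mem_cons, forall_eq_or_imp]
      tauto

lemma finSum_adj0_eq_zero {S : Type*} [Add S] {n : ℕ} (f : Fin n → Adj0 S) (i : Fin n)
    (d : Adj0 S) (h : ∀ k, f k = Adj0.zero) : (finSum f).getD d = Adj0.zero := by
  cases n with
  | zero => exact i.elim0
  | succ m =>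
    rw [finSum, List.ofFn_succ, List.foldl_cons]
    obtain ⟨c, hc, hiff⟩ := foldl_optStep_adj0 (List.ofFn fun i : Fin m => f i.succ) (f 0)
    rw [show optStep (· + ·) none (f 0) = some (f 0) from rfl, hc]
    have : c = Adj0.zero := hiff.mpr ⟨h 0, by
      intro x hx
      rw [List.mem_ofFn] at hx
      obtain ⟨j, rfl⟩ := hx
      exact h _⟩
    simp [this]

lemma finSum_adj0_ne_zero {S : Type*} [Add S] {n : ℕ} (f : Fin n → Adj0 S) (i : Fin n)
    (d : Adj0 S) (h : f i ≠ Adj0.zero) : (finSum f).getD d ≠ Adj0.zero := by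
  cases n with
  | zero => exact i.elim0
  | succ m =>
    rw [finSum, List.ofFn_succ, List.foldl_cons]
    obtain ⟨c, hc, hiff⟩ := foldl_optStep_adj0 (List.ofFn fun i : Fin m => f i.succ) (f 0)
    rw [show optStep (· + ·) none (f 0) = some (f 0) from rfl, hc]
    simp only [Option.getD_some]
    intro hcz
    obtain ⟨h0, hall⟩ := hiff.mp hcz
    induction i using Fin.cases with
    | zero => exact h h0
    | succ j => exact h (hall _ (List.mem_ofFn.mpr ⟨j, rfl⟩))

/-- Upper-triangularity over `S⁰`: entries strictly below the diagonal are the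
adjoined zero; entries on and above the diagonal lie in `S`. -/
def IsUT {S : Type*} {n : ℕ} (A : MatSR (Adj0 S) n) : Prop :=
  (∀ i j : Fin n, (j : ℕ) < (i : ℕ) → A i j = Adj0.zero) ∧
  (∀ i j : Fin n, (i : ℕ) ≤ (j : ℕ) → ∃ s : S, A i j = Adj0.elem s)

lemma IsUT.mul {S : Type*} [Add S] [Mul S] {n : ℕ} {A B : MatSR (Adj0 S) n}
    (hA : IsUT A) (hB : IsUT B) : IsUT (matMul A B) := by
  constructor
  · intro i j hji
    apply finSum_adj0_eq_zero _ i
    intro k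
    rcases le_or_gt (i : ℕ) (k : ℕ) with h | h
    · rw [hB.1 k j (lt_of_lt_of_le hji h), Adj0.mul_zero]
    · rw [hA.1 i k h, Adj0.zero_mul]
  · intro i j hij
    have hne : matMul A B i j ≠ Adj0.zero := by
      apply finSum_adj0_ne_zero _ i
      obtain ⟨s, hs⟩ := hA.2 i i le_rfl
      obtain ⟨t, ht⟩ := hB.2 i j hij
      rw [hs, ht, Adj0.elem_mul_elem]
      simp
    cases hc : matMul A B i j with
    | zero => exact absurd hc hne
    | elem s => exact ⟨s, rfl⟩

/-- The multiplicative semigroup `UT_n(S)` of upper triangular matrices over `S⁰`. -/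
def UTMat (S : Type u) (n : ℕ) : Type u := {A : MatSR (Adj0 S) n // IsUT A}

instance {S : Type*} [Add S] [Mul S] {n : ℕ} : Mul (UTMat S n) :=
  ⟨fun A B => ⟨matMul A.1 B.1, A.2.mul B.2⟩⟩

/-! ### `S^{01}`: adjoining a zero and an identity, and unitriangular matrices. -/

/-- `S` with a zero and a multiplicative identity adjoined (`S^{01}` in the paper).
The sum of `one` and an `elem` is left undefined in the paper; it is given an
arbitrary value here, and never arises in products of unitriangular matrices. -/
inductive Adj01 (S : Type u) : Type u
  | zero : Adj01 S
  | one : Adj01 S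
  | elem : S → Adj01 S

namespace Adj01

def add' {S : Type*} [Add S] : Adj01 S → Adj01 S → Adj01 S
  | .zero, b => b
  | a, .zero => a
  | .one, .one => .one
  | .one, .elem b => .elem b
  | .elem a, .one => .elem a
  | .elem a, .elem b => .elem (a + b)

def mul' {S : Type*} [Mul S] : Adj01 S → Adj01 S → Adj01 S
  | .zero, _ => .zero
  | _, .zero => .zero
  | .one, b => b
  | a, .one => a
  | .elem a, .elem b => .elem (a * b)

instance {S : Type*} [Add S] : Add (Adj01 S) := ⟨add'⟩
instance {S : Type*} [Mul S] : Mul (Adj01 S) := ⟨mul'⟩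

@[simp] lemma zero_add {S : Type*} [Add S] (b : Adj01 S) : (zero : Adj01 S) + b = b := by
  cases b <;> rfl
@[simp] lemma add_zero {S : Type*} [Add S] (a : Adj01 S) : a + (zero : Adj01 S) = a := by
  cases a <;> rfl
@[simp] lemma one_add_one {S : Type*} [Add S] : (one : Adj01 S) + one = one := rfl
@[simp] lemma elem_add_elem {S : Type*} [Add S] (a b : S) :
    (elem a : Adj01 S) + elem b = elem (a + b) := rfl
@[simp] lemma one_add_elem {S : Type*} [Add S] (b : S) :
    (one : Adj01 S) + elem b = elem b := rfl
@[simp] lemma elem_add_one {S : Type*} [Add S] (a : S) :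
    (elem a : Adj01 S) + one = elem a := rfl
@[simp] lemma zero_mul {S : Type*} [Mul S] (b : Adj01 S) : (zero : Adj01 S) * b = zero := by
  cases b <;> rfl
@[simp] lemma mul_zero {S : Type*} [Mul S] (a : Adj01 S) : a * (zero : Adj01 S) = zero := by
  cases a <;> rfl
@[simp] lemma one_mul {S : Type*} [Mul S] (b : Adj01 S) : (one : Adj01 S) * b = b := by
  cases b <;> rfl
@[simp] lemma mul_one {S : Type*} [Mul S] (a : Adj01 S) : a * (one : Adj01 S) = a := by
  cases a <;> rfl
@[simp] lemma elem_mul_elem {S : Type*} [Mul S] (a b : S) :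
    (elem a : Adj01 S) * elem b = elem (a * b) := rfl

lemma mul_ne_one {S : Type*} [Mul S] {a b : Adj01 S} (ha : a ≠ one) (hb : b ≠ one) :
    a * b ≠ one := by
  cases a <;> cases b <;> simp_all

lemma add_ne_one {S : Type*} [Add S] {a b : Adj01 S} (ha : a ≠ one) (hb : b ≠ one) :
    a + b ≠ one := by
  cases a <;> cases b <;> simp_all

lemma add_01 {S : Type*} [Add S] {a b : Adj01 S} (ha : a = zero ∨ a = one)
    (hb : b = zero ∨ b = one) :
    (a + b = zero ∨ a + b = one) ∧ (a + b = one ↔ a = one ∨ b = one) := by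
  rcases ha with rfl | rfl <;> rcases hb with rfl | rfl <;> simp

end Adj01

lemma foldl_optStep_adj01 {S : Type*} [Add S] (l : List (Adj01 S)) (a : Adj01 S)
    (ha : a = Adj01.zero ∨ a = Adj01.one) (hl : ∀ x ∈ l, x = Adj01.zero ∨ x = Adj01.one) :
    ∃ c : Adj01 S, l.foldl (optStep (· + ·)) (some a) = some c ∧
      (c = Adj01.zero ∨ c = Adj01.one) ∧
      (c = Adj01.one ↔ a = Adj01.one ∨ ∃ x ∈ l, x = Adj01.one) := by
  induction l generalizing a with
  | nil => exact ⟨a, rfl, ha, by simp⟩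
  | cons x l ih =>
    have hx := hl x (by simp)
    have key := Adj01.add_01 ha hx
    obtain ⟨c, hc, hc01, hiff⟩ := ih (a + x) key.1 (fun y hy => hl y (by simp [hy]))
    refine ⟨c, by simpa [optStep] using hc, hc01, ?_⟩
    rw [hiff, key.2]
    simp only [List.mem_cons, exists_eq_or_imp]
    tauto

lemma foldl_optStep_adj01_ne_one {S : Type*} [Add S] (l : List (Adj01 S)) (a : Adj01 S)
    (ha : a ≠ Adj01.one) (hl : ∀ x ∈ l, x ≠ Adj01.one) :
    ∃ c : Adj01 S, l.foldl (optStep (· + ·)) (some a) = some c ∧ c ≠ Adj01.one := by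
  induction l generalizing a with
  | nil => exact ⟨a, rfl, ha⟩
  | cons x l ih =>
    have hax : a + x ≠ Adj01.one := Adj01.add_ne_one ha (hl x (by simp))
    obtain ⟨c, hc, hcne⟩ := ih (a + x) hax (fun y hy => hl y (by simp [hy]))
    exact ⟨c, by simpa [optStep] using hc, hcne⟩

lemma finSum_adj01_eq_one {S : Type*} [Add S] {n : ℕ} (f : Fin n → Adj01 S) (i : Fin n)
    (d : Adj01 S) (h01 : ∀ k, f k = Adj01.zero ∨ f k = Adj01.one) (hi : f i = Adj01.one) :
    (finSum f).getD d = Adj01.one := by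
  cases n with
  | zero => exact i.elim0
  | succ m =>
    rw [finSum, List.ofFn_succ, List.foldl_cons]
    obtain ⟨c, hc, _, hiff⟩ := foldl_optStep_adj01 (List.ofFn fun i : Fin m => f i.succ) (f 0)
      (h01 0) (by
        intro x hx
        rw [List.mem_ofFn] at hx
        obtain ⟨j, rfl⟩ := hx
        exact h01 _)
    rw [show optStep (· + ·) none (f 0) = some (f 0) from rfl, hc]
    simp only [Option.getD_some]
    apply hiff.mpr
    induction i using Fin.cases with
    | zero => exact Or.inl hi
    | succ j => exact Or.inr ⟨f j.succ, List.mem_ofFn.mpr ⟨j, rfl⟩, hi⟩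

lemma finSum_adj01_eq_zero {S : Type*} [Add S] {n : ℕ} (f : Fin n → Adj01 S) (i : Fin n)
    (d : Adj01 S) (h : ∀ k, f k = Adj01.zero) : (finSum f).getD d = Adj01.zero := by
  cases n with
  | zero => exact i.elim0
  | succ m =>
    rw [finSum, List.ofFn_succ, List.foldl_cons]
    obtain ⟨c, hc, hc01, hiff⟩ := foldl_optStep_adj01 (List.ofFn fun i : Fin m => f i.succ)
      (f 0) (Or.inl (h 0)) (by
        intro x hx
        rw [List.mem_ofFn] at hx
        obtain ⟨j, rfl⟩ := hx
        exact Or.inl (h _))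
    rw [show optStep (· + ·) none (f 0) = some (f 0) from rfl, hc]
    simp only [Option.getD_some]
    rcases hc01 with h' | h'
    · exact h'
    · exfalso
      rcases hiff.mp h' with h'' | ⟨x, hx, hx1⟩
      · rw [h 0] at h''; cases h''
      · rw [List.mem_ofFn] at hx
        obtain ⟨j, rfl⟩ := hx
        rw [h _] at hx1; cases hx1

lemma finSum_adj01_ne_one {S : Type*} [Add S] {n : ℕ} (f : Fin n → Adj01 S) (i : Fin n)
    (d : Adj01 S) (h : ∀ k, f k ≠ Adj01.one) : (finSum f).getD d ≠ Adj01.one := by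
  cases n with
  | zero => exact i.elim0
  | succ m =>
    rw [finSum, List.ofFn_succ, List.foldl_cons]
    obtain ⟨c, hc, hcne⟩ := foldl_optStep_adj01_ne_one (List.ofFn fun i : Fin m => f i.succ)
      (f 0) (h 0) (by
        intro x hx
        rw [List.mem_ofFn] at hx
        obtain ⟨j, rfl⟩ := hx
        exact h _)
    rw [show optStep (· + ·) none (f 0) = some (f 0) from rfl, hc]
    simpa using hcne

/-- Unitriangularity over `S^{01}`: the adjoined zero strictly below the diagonal, the
adjoined identity on the diagonal, and entries of `S⁰` (i.e. anything except the
adjoined identity) strictly above the diagonal. -/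
def IsU {S : Type*} {n : ℕ} (A : MatSR (Adj01 S) n) : Prop :=
  (∀ i j : Fin n, (j : ℕ) < (i : ℕ) → A i j = Adj01.zero) ∧
  (∀ i : Fin n, A i i = Adj01.one) ∧
  (∀ i j : Fin n, (i : ℕ) < (j : ℕ) → A i j ≠ Adj01.one)

lemma IsU.mul {S : Type*} [Add S] [Mul S] {n : ℕ} {A B : MatSR (Adj01 S) n}
    (hA : IsU A) (hB : IsU B) : IsU (matMul A B) := by
  refine ⟨?_, ?_, ?_⟩
  · intro i j hji
    apply finSum_adj01_eq_zero _ i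
    intro k
    rcases le_or_gt (i : ℕ) (k : ℕ) with h | h
    · rw [hB.1 k j (lt_of_lt_of_le hji h), Adj01.mul_zero]
    · rw [hA.1 i k h, Adj01.zero_mul]
  · intro i
    apply finSum_adj01_eq_one _ i
    · intro k
      rcases lt_trichotomy (k : ℕ) (i : ℕ) with h | h | h
      · rw [hA.1 i k h, Adj01.zero_mul]; exact Or.inl rfl
      · have : k = i := Fin.ext h
        subst this
        rw [hA.2.1 k, hB.2.1 k, Adj01.one_mul]; exact Or.inr rfl
      · rw [hB.1 k i h, Adj01.mul_zero]; exact Or.inl rfl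
    · rw [hA.2.1 i, hB.2.1 i, Adj01.one_mul]
  · intro i j hij
    apply finSum_adj01_ne_one _ i
    intro k
    rcases lt_trichotomy (k : ℕ) (i : ℕ) with h | h | h
    · rw [hA.1 i k h, Adj01.zero_mul]; exact fun h => by cases h
    · have : k = i := Fin.ext h
      subst this
      rw [hA.2.1 k, Adj01.one_mul]
      exact hB.2.2 k j (by omega)
    · rcases lt_trichotomy (k : ℕ) (j : ℕ) with h' | h' | h'
      · exact Adj01.mul_ne_one (hA.2.2 i k h) (hB.2.2 k j h')
      · have : k = j := Fin.ext h'
        subst this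
        rw [hB.2.1 k, Adj01.mul_one]
        exact hA.2.2 i k h
      · rw [hB.1 k j h', Adj01.mul_zero]; exact fun h => by cases h

/-- The multiplicative monoid `U_n(S)` of unitriangular matrices over `S^{01}`. -/
def UMat (S : Type u) (n : ℕ) : Type u := {A : MatSR (Adj01 S) n // IsU A}

instance {S : Type*} [Add S] [Mul S] {n : ℕ} : Mul (UMat S n) :=
  ⟨fun A B => ⟨matMul A.1 B.1, A.2.mul B.2⟩⟩

/-! ### Monogenic subsemirings. -/

/-- The carrier of the monogenic subsemiring `⟨a⟩` generated by `a` is the set of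
positive powers of `a`; in a bipotent semiring it is closed under addition. -/
instance genAdd {S : Type*} [BipotentSemiring S] (a : S) : Add ↥(Set.range (mpow a)) :=
  ⟨fun p q => ⟨p.1 + q.1, by
    rcases BipotentSemiring.bipotent p.1 q.1 with h | h <;> rw [h]
    exacts [p.2, q.2]⟩⟩

instance genMul {S : Type*} [BipotentSemiring S] (a : S) : Mul ↥(Set.range (mpow a)) :=
  ⟨fun p q => ⟨p.1 * q.1, by
    obtain ⟨m, hm⟩ := p.2
    obtain ⟨n, hn⟩ := q.2
    exact ⟨m + n + 1, by rw [← hm, ← hn, mpow_mul_mpow]⟩⟩⟩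

/-! ### Concrete bipotent semirings. -/

/-- The tropical semiring `ℕ_max` of positive natural numbers: addition is `max`,
multiplication is ordinary addition. -/
def NMax : Type := {n : ℕ // 0 < n}

instance : Add NMax := ⟨fun a b => ⟨max a.1 b.1, by have := a.2; have := b.2; omega⟩⟩
instance : Mul NMax := ⟨fun a b => ⟨a.1 + b.1, by have := a.2; have := b.2; omega⟩⟩

/-- The tropical semiring `(-ℕ)_max` of negative integers: addition is `max`,
multiplication is ordinary addition. -/
def NegNMax : Type := {z : ℤ // z < 0}

instance : Add NegNMax := ⟨fun a b => ⟨max a.1 b.1, by have := a.2; have := b.2; omega⟩⟩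
instance : Mul NegNMax := ⟨fun a b => ⟨a.1 + b.1, by have := a.2; have := b.2; omega⟩⟩

/-- The truncated tropical semiring `[k]_max` on `{1,…,k}`: addition is `max`,
multiplication is `a·b = min (a+b) k`. -/
def KMax (k : ℕ) : Type := {n : ℕ // 0 < n ∧ n ≤ k}

instance {k : ℕ} : Add (KMax k) :=
  ⟨fun a b => ⟨max a.1 b.1, by have := a.2; have := b.2; omega⟩⟩
instance {k : ℕ} : Mul (KMax k) :=
  ⟨fun a b => ⟨min (a.1 + b.1) k, by have := a.2; have := b.2; omega⟩⟩

/-- The truncated tropical semiring `[-k]_max` on `{-k,…,-1}`: addition is `max`,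
multiplication is `a·b = max (a+b) (-k)`. -/
def NegKMax (k : ℕ) : Type := {z : ℤ // -(k : ℤ) ≤ z ∧ z ≤ -1}

instance {k : ℕ} : Add (NegKMax k) :=
  ⟨fun a b => ⟨max a.1 b.1, by have := a.2; have := b.2; omega⟩⟩
instance {k : ℕ} : Mul (NegKMax k) :=
  ⟨fun a b => ⟨max (a.1 + b.1) (-(k : ℤ)), by have := a.2; have := b.2; omega⟩⟩

/-- The two-element boolean semifield `𝔹`: `{0,1}` with `0 < 1`, addition `max` (= "or")
and the usual multiplication (= "and"). -/
def BoolSR : Type := Bool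

instance : Add BoolSR := ⟨fun a b => (Bool.or a b : Bool)⟩
instance : Mul BoolSR := ⟨fun a b => (Bool.and a b : Bool)⟩

/-- A chain semiring: a linearly ordered set with addition `max` and multiplication `min`. -/
def ChainSR (L : Type u) [LinearOrder L] : Type u := L

instance {L : Type u} [LinearOrder L] : Add (ChainSR L) := ⟨fun a b => (max a b : L)⟩
instance {L : Type u} [LinearOrder L] : Mul (ChainSR L) := ⟨fun a b => (min a b : L)⟩

/-- The three-element commutative bipotent semiring of Proposition 1: order `A < B < C`
(addition is `max`), every element multiplicatively idempotent, and all products of two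
distinct elements equal to `B`. -/
inductive Three : Type
  | A : Three
  | B : Three
  | C : Three
deriving DecidableEq

instance : Fintype Three := ⟨{Three.A, Three.B, Three.C}, fun x => by cases x <;> simp⟩

def Three.add' : Three → Three → Three
  | .A, y => y
  | x, .A => x
  | .B, y => y
  | x, .B => x
  | .C, .C => .C

def Three.mul' : Three → Three → Three
  | .A, .A => .A
  | .B, .B => .B
  | .C, .C => .C
  | _, _ => .B

instance : Add Three := ⟨Three.add'⟩
instance : Mul Three := ⟨Three.mul'⟩

instance : CommBipotentSemiring Three where
  nonempty' := ⟨Three.A⟩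
  add_assoc' := by decide
  add_comm' := by decide
  mul_assoc' := by decide
  left_distrib' := by decide
  right_distrib' := by decide
  bipotent := by decide
  mul_comm' := by decide

/-- A bundled (possibly zero-less and identity-less) semiring, used to quantify over
semirings inside hypotheses. -/
structure BundledSemiring : Type 1 where
  carrier : Type
  add : carrier → carrier → carrier
  mul : carrier → carrier → carrier
  nonempty' : Nonempty carrier
  add_assoc' : ∀ a b c, add (add a b) c = add a (add b c)
  add_comm' : ∀ a b, add a b = add b a
  mul_assoc' : ∀ a b c, mul (mul a b) c = mul a (mul b c)
  left_distrib' : ∀ a b c, mul a (add b c) = add (mul a b) (mul a c)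
  right_distrib' : ∀ a b c, mul (add a b) c = add (mul a c) (mul b c)

/-! ### Semifields. -/

/-- `z` is a zero element: additively neutral and multiplicatively absorbing. -/
def IsZeroElem {S : Type*} [Add S] [Mul S] (z : S) : Prop :=
  ∀ x : S, z + x = x ∧ x + z = x ∧ z * x = z ∧ x * z = z

/-- `S` is a semifield: a commutative semiring, possibly without zero, whose set of
non-zero elements forms a group under multiplication (with identity `e`). -/
def IsSemifield (S : Type*) [Add S] [Mul S] : Prop :=
  ∃ e : S, ¬ IsZeroElem e ∧
    (∀ x : S, ¬ IsZeroElem x → e * x = x ∧ x * e = x) ∧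
    (∀ x y : S, ¬ IsZeroElem x → ¬ IsZeroElem y → ¬ IsZeroElem (x * y)) ∧
    (∀ x : S, ¬ IsZeroElem x → ∃ y : S, ¬ IsZeroElem y ∧ x * y = e ∧ y * x = e)

/-! ### Truncated tropical semirings. -/

/-- The underlying set `[x,y] ∪ {0}` of the truncated tropical semiring `𝕋_{[x,y]}`
(without the zero element `-∞`), for `0 ≤ x`.  Addition is `max`; multiplication is
`y`-truncated addition `a ⊗ b = min (a+b) y`, with the element `0` acting as the
multiplicative identity. -/
def TTb (x y : ℝ) (_hx : 0 ≤ x) : Type := {r : ℝ // r = 0 ∨ (x ≤ r ∧ r ≤ y)}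

namespace TTb

protected def add {x y : ℝ} {hx : 0 ≤ x} (a b : TTb x y hx) : TTb x y hx :=
  ⟨max a.1 b.1, by rcases max_choice a.1 b.1 with h | h <;> rw [h]
                   exacts [a.2, b.2]⟩

protected noncomputable def mul {x y : ℝ} {hx : 0 ≤ x} (a b : TTb x y hx) : TTb x y hx :=
  if ha : a.1 = 0 then b else if hb : b.1 = 0 then a else
    ⟨min (a.1 + b.1) y, by
      rcases a.2 with h | h
      · exact absurd h ha
      rcases b.2 with h' | h'
      · exact absurd h' hb
      right
      exact ⟨le_min (by linarith [h.1, h'.1]) (by linarith [h.1, h.2]), min_le_right _ _⟩⟩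

instance {x y : ℝ} {hx : 0 ≤ x} : Add (TTb x y hx) := ⟨TTb.add⟩
noncomputable instance {x y : ℝ} {hx : 0 ≤ x} : Mul (TTb x y hx) := ⟨TTb.mul⟩

end TTb

/-- The truncated tropical semiring `𝕋_{[x,y]}` (for `0 ≤ x < y`): the real interval
`[x,y]` together with a multiplicative identity `0` and a zero `-∞`, with addition
`max` and multiplication the `y`-truncated addition `a ⊗ b = min (a+b) y`. -/
abbrev TT (x y : ℝ) (hx : 0 ≤ x) : Type := Adj0 (TTb x y hx)

/-- The multiplicative identity `0` of `𝕋_{[x,y]}`. -/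
noncomputable def ttId (x y : ℝ) (hx : 0 ≤ x) : TT x y hx := Adj0.elem ⟨0, Or.inl rfl⟩

lemma ttId_mul {x y : ℝ} {hx : 0 ≤ x} (b : TT x y hx) : ttId x y hx * b = b := by
  cases b with
  | zero => rfl
  | elem e =>
    show Adj0.elem (TTb.mul ⟨0, Or.inl rfl⟩ e) = Adj0.elem e
    first | (unfold TTb.mul; rw [dif_pos rfl]) | simp [TTb.mul]

/-- The subsemigroup `S` of `M_2(𝕋_{[1,z]})` of matrices of the form `[[0,a],[-∞,b]]`. -/
noncomputable def UpperS (z : ℝ) (hz : (0:ℝ) ≤ 1) : Type :=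
  {A : MatSR (TT 1 z hz) 2 // A 0 0 = ttId 1 z hz ∧ A 1 0 = Adj0.zero}

/-- The subsemigroup `S'` of `M_2(𝕋_{[1,z]})` of matrices of the form `[[0,-∞],[a,b]]`. -/
noncomputable def LowerS (z : ℝ) (hz : (0:ℝ) ≤ 1) : Type :=
  {A : MatSR (TT 1 z hz) 2 // A 0 0 = ttId 1 z hz ∧ A 0 1 = Adj0.zero}

noncomputable instance {z : ℝ} {hz : (0:ℝ) ≤ 1} : Mul (UpperS z hz) :=
  ⟨fun A B => ⟨A.1 * B.1, by
    obtain ⟨hA1, hA2⟩ := A.2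
    obtain ⟨hB1, hB2⟩ := B.2
    constructor
    · show A.1 0 0 * B.1 0 0 + A.1 0 1 * B.1 1 0 = ttId 1 z hz
      rw [hA1, hB1, hB2, ttId_mul, Adj0.mul_zero, Adj0.add_zero]
    · show A.1 1 0 * B.1 0 0 + A.1 1 1 * B.1 1 0 = Adj0.zero
      rw [hA2, hB2, Adj0.zero_mul, Adj0.mul_zero, Adj0.add_zero]⟩⟩

noncomputable instance {z : ℝ} {hz : (0:ℝ) ≤ 1} : Mul (LowerS z hz) :=
  ⟨fun A B => ⟨A.1 * B.1, by
    obtain ⟨hA1, hA2⟩ := A.2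
    obtain ⟨hB1, hB2⟩ := B.2
    constructor
    · show A.1 0 0 * B.1 0 0 + A.1 0 1 * B.1 1 0 = ttId 1 z hz
      rw [hA1, hB1, hA2, ttId_mul, Adj0.zero_mul, Adj0.add_zero]
    · show A.1 0 0 * B.1 0 1 + A.1 0 1 * B.1 1 1 = Adj0.zero
      rw [hA1, hB2, hA2, ttId_mul, Adj0.zero_mul, Adj0.add_zero]⟩⟩

/-!
Colour each pair `i < j` of positions in a product `s₀ ⋯ s_{k-1}` by the shape of the block
`sᵢ ⋯ s_{j-1}`: which entries are `-∞`, which are the identity `0` and which lie in `[1, z]`.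
By Ramsey's theorem, for large `k` there are positions `u₀ < u₁ < ⋯ < u_m` all of whose blocks
have one common shape `E`.

If some off-diagonal entry of `E` lies in `[1, z]` but neither diagonal entry on its row or column
does, then the opposite off-diagonal entry is `-∞`: the blocks are triangular with one fixed
idempotent diagonal, and for such matrices `W X Y Z = W Y X Z`. Otherwise each `[1, z]`-entry of
a product of `2N ≥ 2z` consecutive blocks is pushed up to the truncation value `z`, so two such
groups of blocks have the same product and can be swapped.
-/

namespace TTb

variable {x y : ℝ} {hx : 0 ≤ x}

lemma val_add (a b : TTb x y hx) : (a + b).1 = max a.1 b.1 := rfl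

lemma val_nonneg (a : TTb x y hx) : 0 ≤ a.1 := by
  rcases a.2 with h | ⟨h, -⟩
  · exact h.ge
  · exact hx.trans h

lemma val_le (hy : 0 ≤ y) (a : TTb x y hx) : a.1 ≤ y := by
  rcases a.2 with h | ⟨-, h⟩
  · exact h.trans_le hy
  · exact h

lemma val_mul (hy : 0 ≤ y) (a b : TTb x y hx) : (a * b).1 = min (a.1 + b.1) y := by
  change (TTb.mul a b).1 = _
  unfold TTb.mul
  split_ifs with ha hb
  · rw [ha, zero_add, min_eq_left (val_le hy b)]
  · simp only [hb, ↓reduceDIte, add_zero, min_eq_left (val_le hy a)]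
  · simp only [hb, ↓reduceDIte]

/-- For `y < 0` the only element is the identity `0`, so `0 ≤ y` may be assumed. -/
lemma ext_of_nonneg {a b : TTb x y hx} (h : 0 ≤ y → a.1 = b.1) : a = b := by
  refine Subtype.ext ?_
  by_cases hy : 0 ≤ y
  · exact h hy
  · have (c : TTb x y hx) : c.1 = 0 :=
      c.2.resolve_right fun hc => hy (hx.trans (hc.1.trans hc.2))
    rw [this a, this b]

noncomputable instance : PlainSemiring (TTb x y hx) where
  nonempty' := ⟨⟨0, Or.inl rfl⟩⟩
  add_assoc' _ _ _ := Subtype.ext (max_assoc _ _ _)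
  add_comm' _ _ := Subtype.ext (max_comm _ _)
  mul_assoc' a b c := ext_of_nonneg fun hy => by
    simp only [val_mul hy]
    rw [← min_add_add_right, ← min_add_add_left, min_assoc, min_assoc, add_assoc,
      min_eq_right (le_add_of_nonneg_right (val_nonneg c)),
      min_eq_right (le_add_of_nonneg_left (val_nonneg a))]
  left_distrib' _ _ _ := ext_of_nonneg fun hy => by
    simp only [val_mul hy, val_add, ← max_add_add_left, min_max_distrib_right]
  right_distrib' _ _ _ := ext_of_nonneg fun hy => by
    simp only [val_mul hy, val_add, ← max_add_add_right, min_max_distrib_right]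

instance : One (TTb x y hx) := ⟨⟨0, Or.inl rfl⟩⟩

protected lemma mul_one (c : TTb x y hx) : c * 1 = c :=
  ext_of_nonneg fun hy => by
    rw [val_mul hy]
    change min (c.1 + 0) y = c.1
    rw [add_zero, min_eq_left (val_le hy c)]

end TTb

namespace Adj0

variable {S : Type*}

instance : Zero (Adj0 S) := ⟨zero⟩

instance [PlainSemiring S] : NonUnitalSemiring (Adj0 S) where
  add_assoc a b c := by cases a <;> cases b <;> cases c <;> simp [PlainSemiring.add_assoc']
  zero_add := zero_add
  add_zero := add_zero
  add_comm a b := by cases a <;> cases b <;> simp [PlainSemiring.add_comm']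
  nsmul := nsmulRec
  left_distrib a b c := by
    cases a <;> cases b <;> cases c <;> simp [PlainSemiring.left_distrib']
  right_distrib a b c := by
    cases a <;> cases b <;> cases c <;> simp [PlainSemiring.right_distrib']
  zero_mul := zero_mul
  mul_zero := mul_zero
  mul_assoc a b c := by cases a <;> cases b <;> cases c <;> simp [PlainSemiring.mul_assoc']

end Adj0

noncomputable instance {x y : ℝ} {hx : 0 ≤ x} : Semiring (TT x y hx) where
  one := ttId x y hx
  one_mul := ttId_mul
  mul_one a := by
    cases a with
    | zero => rfl
    | elem c => exact congrArg Adj0.elem (TTb.mul_one c)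

@[to_additive]
lemma List.foldl_optStep_mul {M : Type*} [Monoid M] (l : List M) (a : M) :
    l.foldl (optStep (· * ·)) (some a) = some (a * l.prod) := by
  induction l generalizing a with
  | nil => simp
  | cons b l ih => simp [optStep, ih, mul_assoc]

lemma finProd_eq_some_prod {M : Type*} [Monoid M] {k : ℕ} (s : Fin (k + 1) → M) :
    finProd s = some (List.ofFn s).prod := by
  simp [finProd, List.ofFn_succ, optStep, List.foldl_optStep_mul]

lemma finSum_eq_some_sum {M : Type*} [AddCommMonoid M] {k : ℕ} (s : Fin (k + 1) → M) :
    finSum s = some (∑ i, s i) := by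
  simp [finSum, List.ofFn_succ, optStep, List.foldl_optStep_add, Fin.sum_univ_succ,
    List.sum_ofFn]

namespace MatSR

variable {R : Type*} {n : ℕ}

lemma mul_apply_two [Add R] [Mul R] (A B : MatSR R 2) (i j : Fin 2) :
    (A * B) i j = A i 0 * B 0 j + A i 1 * B 1 j := by
  simp [HMul.hMul, Mul.mul, matMul, finSum, List.ofFn_succ, optStep]

lemma mul_apply [NonUnitalNonAssocSemiring R] (A B : MatSR R n) (i j : Fin n) :
    (A * B : MatSR R n) i j = ∑ k, A i k * B k j := by
  cases n with
  | zero => exact i.elim0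
  | succ n =>
    change (finSum fun k => A i k * B k j).getD _ = _
    rw [finSum_eq_some_sum]
    rfl

instance [Semiring R] : Monoid (MatSR R n) where
  mul_assoc A B C := by
    funext i j
    simp only [mul_apply, Finset.sum_mul, Finset.mul_sum, mul_assoc]
    exact Finset.sum_comm
  one := (1 : Matrix (Fin n) (Fin n) R)
  one_mul A := by
    funext i j
    rw [mul_apply]
    exact congrFun (congrFun (Matrix.one_mul (Matrix.of A)) i) j
  mul_one A := by
    funext i j
    rw [mul_apply]
    exact congrFun (congrFun (Matrix.mul_one (Matrix.of A)) i) j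

@[simp] lemma one_apply_self [Semiring R] (i : Fin n) : (1 : MatSR R n) i i = 1 :=
  Matrix.one_apply_eq i

theorem mul_swap_middle_of_triangular [Semiring R] {p q : Fin 2} (hpq : p ≠ q) {d e : R}
    (hd : IsIdempotentElem d) (he : IsIdempotentElem e) {W X Y Z : MatSR R 2}
    (h : ∀ A ∈ [W, X, Y, Z], A p p = d ∧ A q q = e ∧ A q p = 0) :
    W * Y * X * Z = W * X * Y * Z := by
  have hd' (a : R) : d * (d * a) = d * a := by rw [← mul_assoc, hd.eq]
  simp only [List.mem_cons, List.not_mem_nil, or_false, forall_eq_or_imp, forall_eq] at h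
  funext i j
  fin_cases p <;> fin_cases q <;> simp only [Fin.zero_eta, Fin.mk_one, Fin.isValue] at h hpq ⊢ <;>
    simp at hpq <;>
    obtain ⟨⟨hW₁, hW₂, hW₃⟩, ⟨hX₁, hX₂, hX₃⟩, ⟨hY₁, hY₂, hY₃⟩, ⟨hZ₁, hZ₂, hZ₃⟩⟩ := h <;>
    fin_cases i <;> fin_cases j <;>
    simp [mul_apply_two, hW₁, hW₂, hW₃, hX₁, hX₂, hX₃, hY₁, hY₂, hY₃, hZ₁, hZ₂, hZ₃, add_mul,
      mul_add, mul_assoc, hd', he.eq] <;> abel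

end MatSR

section BlockProd

variable {M : Type*} [Monoid M]

def blockProd (f : ℕ → M) (a b : ℕ) : M := ((List.range' a (b - a)).map f).prod

@[simp] lemma blockProd_self (f : ℕ → M) (a : ℕ) : blockProd f a a = 1 := by simp [blockProd]

@[simp] lemma blockProd_succ_self (f : ℕ → M) (a : ℕ) : blockProd f a (a + 1) = f a := by
  simp [blockProd]

variable {f : ℕ → M} {a b c : ℕ}

lemma blockProd_mul_blockProd (hab : a ≤ b) (hbc : b ≤ c) :
    blockProd f a b * blockProd f b c = blockProd f a c := by
  obtain ⟨m, rfl⟩ := Nat.exists_eq_add_of_le hab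
  obtain ⟨n, rfl⟩ := Nat.exists_eq_add_of_le hbc
  rw [blockProd, blockProd, blockProd, ← List.prod_append, ← List.map_append,
    Nat.add_sub_cancel_left, Nat.add_sub_cancel_left, add_assoc, Nat.add_sub_cancel_left,
    List.range'_append_1]

lemma blockProd_regroup {u : ℕ → ℕ} (hu : Monotone u) (hab : a ≤ b) :
    blockProd f (u a) (u b) = blockProd (fun r => blockProd f (u r) (u (r + 1))) a b := by
  induction b, hab using Nat.le_induction with
  | base => simp
  | succ b hab ih =>
    rw [← blockProd_mul_blockProd (hu hab) (hu b.le_succ), ih,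
      ← blockProd_mul_blockProd hab b.le_succ, blockProd_succ_self]

lemma prod_ofFn_eq_blockProd (t : ℕ → M) (k : ℕ) :
    (List.ofFn fun i : Fin k => t i).prod = blockProd t 0 k := by
  rw [blockProd, Nat.sub_zero, ← List.range_eq_range', ← List.map_coe_finRange_eq_range,
    List.map_map, List.ofFn_eq_map]
  rfl

end BlockProd

def blockSwapFun (a b c j : ℕ) : ℕ :=
  if j < a then j else if j < a + (c - b) then j + (b - a) else if j < c then j - (c - b) else j

lemma map_blockSwapFun_range {a b c k : ℕ} (hab : a ≤ b) (hbc : b ≤ c) (hck : c ≤ k) :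
    (List.range k).map (blockSwapFun a b c) =
      List.range' 0 a ++ List.range' b (c - b) ++ List.range' a (b - a) ++
        List.range' c (k - c) := by
  apply List.ext_getElem
  · simp; omega
  · intro j h₁ h₂
    simp only [List.getElem_map, List.getElem_range, List.getElem_append, List.length_append,
      List.length_range', List.getElem_range']
    unfold blockSwapFun
    split_ifs <;> omega

noncomputable def blockSwap {a b c k : ℕ} (hab : a ≤ b) (hbc : b ≤ c) (hck : c ≤ k) :
    Equiv.Perm (Fin k) :=
  Equiv.ofBijective (fun j => ⟨blockSwapFun a b c j, by unfold blockSwapFun; split_ifs <;> omega⟩)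
    (Finite.injective_iff_bijective.mp fun i j h => by
      simp only [Fin.ext_iff, blockSwapFun] at h ⊢
      split_ifs at h <;> omega)

lemma blockSwap_ne_one {a b c k : ℕ} (hab : a < b) (hbc : b < c) (hck : c ≤ k) :
    blockSwap hab.le hbc.le hck ≠ 1 := by
  intro h
  have h' : blockSwapFun a b c a = a := congrArg Fin.val (Equiv.ext_iff.mp h ⟨a, by omega⟩)
  unfold blockSwapFun at h'
  split_ifs at h' <;> omega

lemma prod_ofFn_blockSwap {M : Type*} [Monoid M] (t : ℕ → M) {a b c k : ℕ} (hab : a ≤ b)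
    (hbc : b ≤ c) (hck : c ≤ k) :
    (List.ofFn fun i => t (blockSwap hab hbc hck i)).prod =
      blockProd t 0 a * blockProd t b c * blockProd t a b * blockProd t c k := by
  have := congrArg (fun l => (l.map t).prod) (map_blockSwapFun_range hab hbc hck)
  simp only [List.map_append, List.prod_append, List.map_map] at this
  rw [blockProd, blockProd, blockProd, blockProd, Nat.sub_zero, ← this,
    ← List.map_coe_finRange_eq_range, List.map_map, List.ofFn_eq_map]
  rfl

theorem kPermutable_of_forall_exists_swap {M : Type*} [Monoid M] {k : ℕ}
    (h : ∀ t : ℕ → M, ∃ a b c d e, a ≤ b ∧ b < c ∧ c < d ∧ d ≤ e ∧ e ≤ k ∧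
      blockProd t a b * blockProd t c d * blockProd t b c * blockProd t d e =
        blockProd t a b * blockProd t b c * blockProd t c d * blockProd t d e) :
    KPermutable M k := by
  intro s
  set t : ℕ → M := fun j => if h : j < k then s ⟨j, h⟩ else 1
  have hs : s = fun i : Fin k => t i := funext fun i => by simp [t]
  obtain ⟨a, b, c, d, e, hab, hbc, hcd, hde, hek, heq⟩ := h t
  obtain ⟨k, rfl⟩ : ∃ k', k = k' + 1 := ⟨k - 1, by omega⟩
  refine ⟨blockSwap hbc.le hcd.le (hde.trans hek), blockSwap_ne_one hbc hcd _, ?_⟩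
  rw [finProd_eq_some_prod, finProd_eq_some_prod, hs, prod_ofFn_blockSwap,
    prod_ofFn_eq_blockProd]
  congr 1
  rw [← blockProd_mul_blockProd (Nat.zero_le a) hab, ← blockProd_mul_blockProd hde hek]
  calc _ = blockProd t 0 a * (blockProd t a b * blockProd t c d * blockProd t b c *
        blockProd t d e) * blockProd t e (k + 1) := by simp only [mul_assoc]
    _ = blockProd t 0 (k + 1) := by
      rw [heq]
      simp only [mul_assoc]
      rw [blockProd_mul_blockProd hde hek, blockProd_mul_blockProd hcd.le (by omega),
        blockProd_mul_blockProd hbc.le (by omega), blockProd_mul_blockProd hab (by omega),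
        blockProd_mul_blockProd (Nat.zero_le a) (by omega)]

section Ramsey

open Finset

variable {C : Type*} [Fintype C]

lemma exists_strictMono_colour_eq_left (L : ℕ) (A : Finset ℕ)
    (hA : (Fintype.card C + 1) ^ L ≤ #A) (col : ℕ → ℕ → C) :
    ∃ v : Fin (L + 1) → ℕ, StrictMono v ∧ (∀ i, v i ∈ A) ∧
      ∃ c : Fin (L + 1) → C, ∀ i j, i < j → col (v i) (v j) = c i := by
  have hA₀ : A.Nonempty := card_pos.mp (lt_of_lt_of_le (Nat.one_le_pow _ _ (by omega)) hA)
  induction L generalizing A with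
  | zero =>
    obtain ⟨a, ha⟩ := hA₀
    have : Subsingleton (Fin (0 + 1)) := Fin.subsingleton_one
    exact ⟨fun _ => a, Subsingleton.strictMono _, fun _ => ha, fun _ => col a a,
      fun i j hij => absurd hij (Subsingleton.elim i j).not_lt⟩
  | succ L ih =>
    classical
    have : Nonempty C := ⟨col 0 0⟩
    set a := A.min' hA₀
    have hpow : 1 ≤ (Fintype.card C + 1) ^ L := Nat.one_le_pow _ _ (by omega)
    obtain ⟨c₀, -, hc₀⟩ := exists_le_card_fiber_of_mul_le_card_of_maps_to
      (s := A.erase a) (f := col a) (fun _ _ => mem_univ _) univ_nonempty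
      (n := (Fintype.card C + 1) ^ L) (by
        rw [card_univ, card_erase_of_mem (A.min'_mem hA₀)]
        rw [pow_succ] at hA
        apply Nat.le_sub_one_of_lt
        nlinarith)
    obtain ⟨v, hv, hvB, c, hc⟩ := ih _ hc₀ (card_pos.mp (hpow.trans hc₀))
    have hvA (i) : v i ∈ A.erase a := (mem_filter.mp (hvB i)).1
    refine ⟨Fin.cons a v, Fin.strictMono_cons.mpr ⟨fun i => ?_, hv⟩, Fin.cases (A.min'_mem hA₀)
      fun i => mem_of_mem_erase (hvA i), Fin.cons c₀ c, Fin.cases ?_ fun i => Fin.cases ?_ ?_⟩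
    · exact A.min'_lt_of_mem_erase_min' hA₀ (hvA i)
    · intro j _
      induction j using Fin.cases with
      | zero => omega
      | succ j => exact (mem_filter.mp (hvB j)).2
    · intro h; simp at h
    · intro j h
      simpa using hc i j (by simpa using h)

lemma Fin.exists_strictMono_nat_extend {m : ℕ} {w : Fin (m + 1) → ℕ} (hw : StrictMono w) :
    ∃ u : ℕ → ℕ, StrictMono u ∧ ∀ i : Fin (m + 1), u i = w i := by
  refine ⟨fun j => w ⟨min j m, by omega⟩ + (j - m), strictMono_nat_of_lt_succ fun j => ?_,
    fun i => by simp [Nat.min_eq_left (Nat.le_of_lt_succ i.2),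
      Nat.sub_eq_zero_of_le (Nat.le_of_lt_succ i.2)]⟩
  rcases lt_or_ge j m with h | h
  · have := hw (show (⟨min j m, by omega⟩ : Fin (m + 1)) < ⟨min (j + 1) m, by omega⟩ by
      simp only [Fin.mk_lt_mk]; omega)
    omega
  · simp only [Nat.min_eq_right h, Nat.min_eq_right (h.trans j.le_succ)]
    omega

theorem exists_monochromatic_chain (m : ℕ) : ∃ n, ∀ col : ℕ → ℕ → C,
    ∃ u : ℕ → ℕ, StrictMono u ∧ u m < n ∧ ∃ E, ∀ i j, i < j → j ≤ m → col (u i) (u j) = E := by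
  classical
  set L := Fintype.card C * m
  refine ⟨(Fintype.card C + 1) ^ L, fun col => ?_⟩
  obtain ⟨v, hv, hvA, c, hc⟩ :=
    exists_strictMono_colour_eq_left L (range ((Fintype.card C + 1) ^ L)) (by simp) col
  obtain ⟨E, hE⟩ := Fintype.exists_lt_card_fiber_of_mul_lt_card c (n := m) (by simp [L])
  set e := ({i | c i = E} : Finset _).orderEmbOfCardLe hE
  obtain ⟨u, hu, huw⟩ := Fin.exists_strictMono_nat_extend (hv.comp e.strictMono)
  refine ⟨u, hu, ?_, E, fun i j hij hjm => ?_⟩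
  · have := huw (Fin.last m)
    simp only [Fin.val_last, Function.comp_apply] at this
    simpa [this] using hvA (e (Fin.last m))
  · have hi := huw ⟨i, by omega⟩
    have hj := huw ⟨j, by omega⟩
    simp only [Function.comp_apply] at hi hj
    rw [hi, hj, hc _ _ (e.strictMono (by simpa [Fin.lt_def] using hij))]
    simpa using orderEmbOfCardLe_mem _ hE ⟨i, by omega⟩

end Ramsey

namespace TT

variable {x y : ℝ} {hx : 0 ≤ x}

def val : TT x y hx → WithBot ℝ
  | .zero => ⊥
  | .elem c => c.1

@[simp] lemma val_elem (c : TTb x y hx) : val (Adj0.elem c) = c.1 := rfl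

@[simp] lemma val_one : val (1 : TT x y hx) = (0 : ℝ) := rfl

lemma val_injective : Function.Injective (val : TT x y hx → WithBot ℝ) := by
  rintro (_ | a) (_ | b) h <;> simp_all [val]
  exact Subtype.ext h

lemma val_add (a b : TT x y hx) : val (a + b) = max (val a) (val b) := by
  cases a <;> cases b <;> simp [val, TTb.val_add]

lemma le_val_mul {a b : TT x y hx} {r s : ℝ} (ha : r ≤ val a) (hb : s ≤ val b) :
    ↑(min (r + s) y) ≤ val (a * b) := by
  cases a with
  | zero => simp [val] at ha
  | elem c =>
  cases b with
  | zero => simp [val] at hb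
  | elem d =>
    rw [val_elem, WithBot.coe_le_coe] at ha hb
    rw [Adj0.elem_mul_elem, val_elem, WithBot.coe_le_coe]
    rcases le_or_gt 0 y with hy | hy
    · rw [TTb.val_mul hy]
      exact min_le_min_right _ (add_le_add ha hb)
    · exact (min_le_right _ _).trans (hy.le.trans (TTb.val_nonneg _))

lemma val_mul_apply_le (A B : MatSR (TT x y hx) 2) (i l j : Fin 2) :
    val (A i l * B l j) ≤ val ((A * B) i j) := by
  rw [MatSR.mul_apply_two, val_add]
  fin_cases l
  · exact le_max_left _ _
  · exact le_max_right _ _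

/-- `bot` is `-∞`, `one` is the multiplicative identity `0`, and `pos` is an element of
`[x, y]`. -/
inductive Shape
  | bot
  | one
  | pos
  deriving DecidableEq

instance : Fintype Shape := ⟨{.bot, .one, .pos}, fun s => by cases s <;> simp⟩

noncomputable def shape : TT x y hx → Shape
  | .zero => .bot
  | .elem c => if c.1 = 0 then .one else .pos

lemma shape_eq_bot {a : TT x y hx} : shape a = .bot ↔ a = 0 := by
  cases a with
  | zero => simp [shape]; rfl
  | elem c => simp [shape]; split_ifs <;> simp

lemma shape_eq_one {a : TT x y hx} : shape a = .one ↔ a = 1 := by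
  cases a with
  | zero => exact ⟨fun h => (nomatch h), fun h => (nomatch h)⟩
  | elem c =>
    change (if c.1 = 0 then Shape.one else Shape.pos) = .one ↔ Adj0.elem c = Adj0.elem 1
    constructor
    · intro h
      split_ifs at h with hc
      exact congrArg Adj0.elem (Subtype.ext hc)
    · rintro ⟨⟩
      exact if_pos rfl

lemma shape_eq_pos (hx₀ : 0 < x) {a : TT x y hx} : shape a = .pos ↔ x ≤ val a := by
  cases a with
  | zero => simp [shape, val]
  | elem c =>
    rw [val_elem, WithBot.coe_le_coe]
    change (if c.1 = 0 then Shape.one else Shape.pos) = .pos ↔ _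
    split_ifs with h
    · simp [h, hx₀]
    · simpa using (c.2.resolve_left h).1

lemma val_le_of_shape_eq_pos {a : TT x y hx} (h : shape a = .pos) : val a ≤ y := by
  cases a with
  | zero => simp [shape] at h
  | elem c =>
    rw [val_elem, WithBot.coe_le_coe]
    change (if c.1 = 0 then Shape.one else Shape.pos) = .pos at h
    split_ifs at h with hc
    exact (c.2.resolve_left hc).2

lemma zero_le_val_of_shape_ne_bot {a : TT x y hx} (ha : shape a ≠ .bot) :
    ((0 : ℝ) : WithBot ℝ) ≤ val a := by
  cases a with
  | zero => exact absurd rfl ha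
  | elem c => exact WithBot.coe_le_coe.mpr (TTb.val_nonneg c)

lemma eq_of_shape_eq_of_ne_pos {a b : TT x y hx} (h : shape a = shape b) (ha : shape a ≠ .pos) :
    a = b := by
  cases hs : shape a
  · rw [shape_eq_bot.mp hs, shape_eq_bot.mp (h.symm.trans hs)]
  · rw [shape_eq_one.mp hs, shape_eq_one.mp (h.symm.trans hs)]
  · exact absurd hs ha

lemma isIdempotentElem_of_shape_ne_pos {a : TT x y hx} (ha : shape a ≠ .pos) :
    IsIdempotentElem a := by
  cases hs : shape a
  · exact shape_eq_bot.mp hs ▸ IsIdempotentElem.zero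
  · exact shape_eq_one.mp hs ▸ IsIdempotentElem.one
  · exact absurd hs ha

lemma shape_mul_eq_pos (hx₀ : 0 < x) {a b : TT x y hx} (ha : shape a = .pos)
    (hb : shape b ≠ .bot) : shape (a * b) = .pos := by
  have hxa := (shape_eq_pos hx₀).mp ha
  have hxy : x ≤ y := WithBot.coe_le_coe.mp (hxa.trans (val_le_of_shape_eq_pos ha))
  have := le_val_mul hxa (zero_le_val_of_shape_ne_bot hb)
  rwa [add_zero, min_eq_left hxy, ← shape_eq_pos hx₀] at this

variable {X : ℕ → MatSR (TT x y hx) 2} {E : Fin 2 → Fin 2 → Shape}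

lemma le_val_blockProd_apply_self (p : Fin 2) (a n : ℕ)
    (h : ∀ r, a ≤ r → r < a + n → x ≤ val (X r p p)) :
    ↑(min (n * x) y) ≤ val (blockProd X a (a + n) p p) := by
  induction n with
  | zero => simp
  | succ n ih =>
    rw [← add_assoc, ← blockProd_mul_blockProd (Nat.le_add_right a n) (Nat.le_succ _),
      blockProd_succ_self]
    refine le_trans ?_ (val_mul_apply_le _ _ p p p)
    convert le_val_mul (ih fun r h₁ h₂ => h r h₁ (by omega)) (h (a + n) (by omega) (by omega))
      using 2
    rw [← min_add_add_right, min_assoc, min_eq_right (le_add_of_nonneg_right hx)]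
    push_cast
    ring_nf

lemma le_val_blockProd_of_shape_eq (hx₀ : 0 < x) {N a : ℕ} (hN₀ : 0 < N) (hN : y ≤ N * x)
    (hE : ∀ b c p q, a ≤ b → b < c → c ≤ a + 2 * N → shape (blockProd X b c p q) = E p q)
    (hgen : ∀ p q, p ≠ q → E p q = .pos → E p p = .pos ∨ E q q = .pos) {p q : Fin 2}
    (hpq : E p q = .pos) : y ≤ val (blockProd X a (a + 2 * N) p q) := by
  have hdiag b n p (h₁ : a ≤ b) (h₂ : b + n ≤ a + 2 * N) (hp : E p p = .pos) :
      ↑(min (n * x) y) ≤ val (blockProd X b (b + n) p p) :=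
    le_val_blockProd_apply_self p b n fun r hr₁ hr₂ => (shape_eq_pos hx₀).mp <| by
      simpa [hp] using hE r (r + 1) p p (by omega) (by omega) (by omega)
  have hsat b p (h₁ : a ≤ b) (h₂ : b + N ≤ a + 2 * N) (hp : E p p = .pos) :
      y ≤ val (blockProd X b (b + N) p p) := by
    simpa [min_eq_right hN] using hdiag b N p h₁ h₂ hp
  have hne_bot b c (h₁ : a ≤ b) (h₂ : b < c) (h₃ : c ≤ a + 2 * N) :
      shape (blockProd X b c p q) ≠ .bot := by
    rw [hE b c p q h₁ h₂ h₃, hpq]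
    exact nofun
  rcases eq_or_ne p q with rfl | hpq'
  · have := hdiag a (2 * N) p le_rfl le_rfl hpq
    rwa [min_eq_right (hN.trans (by push_cast; nlinarith))] at this
  rw [← blockProd_mul_blockProd (b := a + N) (by omega) (by omega)]
  rcases hgen p q hpq' hpq with hp | hq
  · refine le_trans ?_ (val_mul_apply_le _ _ p p q)
    simpa using le_val_mul (hsat a p le_rfl (by omega) hp)
      (zero_le_val_of_shape_ne_bot (hne_bot (a + N) (a + 2 * N) (by omega) (by omega) le_rfl))
  · refine le_trans ?_ (val_mul_apply_le _ _ p q q)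
    have := hsat (a + N) q (by omega) (by omega) hq
    rw [add_assoc, ← two_mul] at this
    simpa using le_val_mul
      (zero_le_val_of_shape_ne_bot (hne_bot a (a + N) le_rfl (by omega) (by omega))) this

lemma blockProd_eq_of_shape_eq (hx₀ : 0 < x) {N : ℕ} (hN₀ : 0 < N) (hN : y ≤ N * x)
    (hE : ∀ a b p q, a < b → b ≤ 4 * N → shape (blockProd X a b p q) = E p q)
    (hgen : ∀ p q, p ≠ q → E p q = .pos → E p p = .pos ∨ E q q = .pos) :
    blockProd X 0 (2 * N) = blockProd X (2 * N) (4 * N) := by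
  have hsat a (ha : a + 2 * N ≤ 4 * N) p q (hpq : E p q = .pos) :=
    le_val_blockProd_of_shape_eq hx₀ (a := a) hN₀ hN
      (fun b c p q _ h₂ h₃ => hE b c p q h₂ (by omega)) hgen hpq
  funext p q
  have h₁ := hE 0 (2 * N) p q (by omega) (by omega)
  have h₂ := hE (2 * N) (4 * N) p q (by omega) (by omega)
  by_cases hpq : E p q = .pos
  · have hy₁ := hsat 0 (by omega) p q hpq
    have hy₂ := hsat (2 * N) (by omega) p q hpq
    rw [zero_add] at hy₁
    rw [show 2 * N + 2 * N = 4 * N by ring] at hy₂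
    exact val_injective (le_antisymm ((val_le_of_shape_eq_pos (h₁.trans hpq)).trans hy₂)
      ((val_le_of_shape_eq_pos (h₂.trans hpq)).trans hy₁))
  · exact eq_of_shape_eq_of_ne_pos (h₁.trans h₂.symm) (h₁ ▸ hpq)

/-- If `E q p` were not `-∞`, the `(p, p)` entry of a product of two blocks would be at
least `x`. -/
lemma eq_bot_of_eq_pos_of_ne_pos (hx₀ : 0 < x)
    (hE : ∀ a b p q, a < b → b ≤ 2 → shape (blockProd X a b p q) = E p q) {p q : Fin 2}
    (hpq : E p q = .pos) (hp : E p p ≠ .pos) : E q p = .bot := by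
  by_contra h
  apply hp
  rw [← hE 0 2 p p (by omega) le_rfl, ← blockProd_mul_blockProd (b := 1) (by omega) (by omega),
    shape_eq_pos hx₀]
  refine le_trans ?_ (val_mul_apply_le _ _ p q p)
  exact (shape_eq_pos hx₀).mp (shape_mul_eq_pos hx₀ ((hE 0 1 p q (by omega) (by omega)).trans hpq)
    ((hE 1 2 q p (by omega) le_rfl).trans_ne h))

theorem exists_swap_of_shape_eq (hx₀ : 0 < x) {N : ℕ} (hN₀ : 0 < N) (hN : y ≤ N * x)
    (hE : ∀ a b p q, a < b → b ≤ 4 * N → shape (blockProd X a b p q) = E p q) :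
    ∃ a b c d e, a ≤ b ∧ b < c ∧ c < d ∧ d ≤ e ∧ e ≤ 4 * N ∧
      blockProd X a b * blockProd X c d * blockProd X b c * blockProd X d e =
        blockProd X a b * blockProd X b c * blockProd X c d * blockProd X d e := by
  by_cases hgen : ∀ p q, p ≠ q → E p q = .pos → E p p = .pos ∨ E q q = .pos
  · refine ⟨0, 0, 2 * N, 4 * N, 4 * N, le_rfl, by omega, by omega, le_rfl, le_rfl, ?_⟩
    rw [blockProd_eq_of_shape_eq hx₀ hN₀ hN hE hgen]
  push Not at hgen
  obtain ⟨p, q, hpq, hEpq, hp, hq⟩ := hgen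
  have hX r p q (hr : r < 4) : shape (X r p q) = E p q := by
    simpa using hE r (r + 1) p q (by omega) (by omega)
  have hqp := eq_bot_of_eq_pos_of_ne_pos hx₀ (fun a b p q h₁ h₂ => hE a b p q h₁ (by omega)) hEpq hp
  have hfix r (hr : r < 4) : X r p p = X 0 p p ∧ X r q q = X 0 q q ∧ X r q p = 0 :=
    ⟨eq_of_shape_eq_of_ne_pos ((hX r p p hr).trans (hX 0 p p (by omega)).symm) (hX r p p hr ▸ hp),
      eq_of_shape_eq_of_ne_pos ((hX r q q hr).trans (hX 0 q q (by omega)).symm) (hX r q q hr ▸ hq),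
      shape_eq_bot.mp ((hX r q p hr).trans hqp)⟩
  refine ⟨0, 1, 2, 3, 4, by omega, by omega, by omega, by omega, by omega, ?_⟩
  simp only [blockProd_succ_self]
  refine MatSR.mul_swap_middle_of_triangular hpq
    (isIdempotentElem_of_shape_ne_pos ((hX 0 p p (by omega)).trans_ne hp))
    (isIdempotentElem_of_shape_ne_pos ((hX 0 q q (by omega)).trans_ne hq)) ?_
  simp [hfix]

end TT

theorem stmt_18_general (z : ℝ) :
    StronglyPermutable (MatSR (TT 1 z zero_le_one) 2) := by
  obtain ⟨N, hN⟩ := exists_nat_ge z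
  obtain ⟨n, hn⟩ := exists_monochromatic_chain (C := Fin 2 → Fin 2 → TT.Shape) (4 * (N + 1))
  refine ⟨n + 2, by omega, kPermutable_of_forall_exists_swap fun t => ?_⟩
  obtain ⟨u, hu, hun, E, hE⟩ := hn fun a b p q => TT.shape (blockProd t a b p q)
  have hregroup {a b} (hab : a ≤ b) := blockProd_regroup (f := t) hu.monotone hab
  obtain ⟨a, b, c, d, e, hab, hbc, hcd, hde, he, heq⟩ :=
    TT.exists_swap_of_shape_eq one_pos (X := fun r => blockProd t (u r) (u (r + 1)))
      (N := N + 1) (by omega) (by push_cast; linarith) fun a b p q hab hb => by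
        rw [← hregroup hab.le]
        exact congrFun (congrFun (hE a b hab hb) p) q
  refine ⟨u a, u b, u c, u d, u e, hu.monotone hab, hu hbc, hu hcd, hu.monotone hde,
    (hu.monotone he).trans (by omega), ?_⟩
  rwa [hregroup hab, hregroup hbc.le, hregroup hcd.le, hregroup hde]

/-- for every real `z > 2`, `M_2(𝕋_{[1,z]})` is strongly permutable. -/
theorem stmt_18 (z : ℝ) (hz : 2 < z) :
    StronglyPermutable (MatSR (TT 1 z zero_le_one) 2) :=
  stmt_18_general z
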